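/- arXiv:1702.06290 — 5 statements merged into one kernel-verified Lean document; each statement's English description precedes it below -/
import Mathlib

section
/- In the mixed braid group B_{1,n}, the looping elements t_0, t_1, …, t_{n−1} pairwise commute: t_i t_j = t_j t_i for all 0 ≤ i, j ≤ n−1. -/
set_option synthInstance.maxHeartbeats 1000000
set_option maxHeartbeats 2000000

namespace MB

/-! ## The mixed braid group `B_{1,n}` (with `m = n - 1` braiding generators) -/

/-- Generators: `none` is the looping generator `t`, `some i` is `σ_{i+1}` for `i : Fin m`. -/
abbrev MBGen (m : ℕ) := Option (Fin m)

/-- The relators of the mixed braid group `B_{1,n}` (`m = n-1`):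
`σ₁tσ₁t = tσ₁tσ₁`; `tσ_i = σ_i t` for `i > 1`; the braid relations among the `σ_i`. -/
def rels (m : ℕ) : Set (FreeGroup (MBGen m)) :=
  { r | (∃ h : 0 < m,
          r = (FreeGroup.of (some ⟨0, h⟩) * FreeGroup.of none) ^ 2 *
              ((FreeGroup.of (none : MBGen m) * FreeGroup.of (some ⟨0, h⟩)) ^ 2)⁻¹) ∨
        (∃ i : Fin m, 1 ≤ (i : ℕ) ∧
          r = FreeGroup.of (none : MBGen m) * FreeGroup.of (some i) *
              (FreeGroup.of (some i) * FreeGroup.of (none : MBGen m))⁻¹) ∨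
        (∃ i j : Fin m, (i : ℕ) + 1 = (j : ℕ) ∧
          r = FreeGroup.of (some i) * FreeGroup.of (some j) * FreeGroup.of (some i) *
              (FreeGroup.of (some j) * FreeGroup.of (some i) * FreeGroup.of (some j))⁻¹) ∨
        (∃ i j : Fin m, (i : ℕ) + 1 < (j : ℕ) ∧
          r = FreeGroup.of (some i) * FreeGroup.of (some j) *
              (FreeGroup.of (some j) * FreeGroup.of (some i))⁻¹) }

/-- The mixed braid group `B_{1,n}` with `n = m+1` moving strands. -/
abbrev B (m : ℕ) := PresentedGroup (rels m)

/-- The braiding generator `σ_{i+1}`, for `i : Fin m`. -/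
def σ {m : ℕ} (i : Fin m) : B m := PresentedGroup.of (some i)

/-- The looping generator `t`. -/
def τ {m : ℕ} : B m := PresentedGroup.of none

/-- `σ_j` in one-based indexing (`1 ≤ j ≤ m`), junk value `1` out of range. -/
def sig {m : ℕ} (j : ℕ) : B m :=
  if h : 1 ≤ j ∧ j - 1 < m then σ ⟨j - 1, h.2⟩ else 1

/-- The looping elements `t_i = σ_i ⋯ σ_1 t σ_1 ⋯ σ_i` (for `0 ≤ i ≤ m`), via `t_0 = t`,
`t_{j+1} = σ_{j+1} t_j σ_{j+1}`. -/
def tt {m : ℕ} : ℕ → B m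
  | 0 => τ
  | (j+1) => sig (j+1) * tt j * sig (j+1)

/-- The looping elements `t′_i = σ_i ⋯ σ_1 t σ_1⁻¹ ⋯ σ_i⁻¹` (for `0 ≤ i ≤ m`), via `t′_0 = t`,
`t′_{j+1} = σ_{j+1} t′_j σ_{j+1}⁻¹`. -/
def tp {m : ℕ} : ℕ → B m
  | 0 => τ
  | (j+1) => sig (j+1) * tp j * (sig (j+1))⁻¹

lemma relq {m : ℕ} {r : FreeGroup (MBGen m)} (h : r ∈ rels m) :
    PresentedGroup.mk (rels m) r = 1 :=
  (QuotientGroup.eq_one_iff r).mpr (Subgroup.subset_normalClosure h)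

lemma rel_tau_sig {m : ℕ} (i : Fin m) (h : 1 ≤ (i : ℕ)) :
    τ * σ i = σ i * τ := by
  have := relq (m := m) (Or.inr (Or.inl ⟨i, h, rfl⟩))
  rw [map_mul, map_mul, map_inv, map_mul, mul_inv_eq_one] at this
  exact this

lemma rel_braid {m : ℕ} (i j : Fin m) (h : (i : ℕ) + 1 = (j : ℕ)) :
    σ i * σ j * σ i = σ j * σ i * σ j := by
  have := relq (m := m) (Or.inr (Or.inr (Or.inl ⟨i, j, h, rfl⟩)))
  rw [map_mul, map_mul, map_mul, map_inv, map_mul, map_mul, mul_inv_eq_one] at this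
  exact this

lemma rel_far {m : ℕ} (i j : Fin m) (h : (i : ℕ) + 1 < (j : ℕ)) :
    σ i * σ j = σ j * σ i := by
  have := relq (m := m) (Or.inr (Or.inr (Or.inr ⟨i, j, h, rfl⟩)))
  rw [map_mul, map_mul, map_inv, map_mul, mul_inv_eq_one] at this
  exact this

lemma rel_one {m : ℕ} (h : 0 < m) :
    (σ ⟨0, h⟩ * τ) ^ 2 = (τ * σ ⟨0, h⟩) ^ 2 := by
  have := relq (m := m) (Or.inl ⟨h, rfl⟩)
  rw [map_mul, map_inv, map_pow, map_pow, map_mul, map_mul, mul_inv_eq_one] at this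
  exact this

lemma sig_eq {m : ℕ} {k : ℕ} (h1 : 1 ≤ k) (h2 : k ≤ m) :
    sig (m := m) k = σ ⟨k - 1, by omega⟩ := dif_pos ⟨h1, by omega⟩

lemma sig_out {m : ℕ} {k : ℕ} (h : ¬(1 ≤ k ∧ k - 1 < m)) : sig (m := m) k = 1 :=
  dif_neg h

lemma tt_succ {m : ℕ} (j : ℕ) : tt (m := m) (j + 1) = sig (j + 1) * tt j * sig (j + 1) := rfl

lemma comm_tau_sig {m : ℕ} {k : ℕ} (hk : 2 ≤ k) : Commute (sig (m := m) k) τ := by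
  by_cases h : k ≤ m
  · rw [sig_eq (by omega) h]
    exact (rel_tau_sig ⟨k - 1, by omega⟩ (by simp; omega)).symm
  · rw [sig_out (by omega)]; exact Commute.one_left _

lemma comm_far {m : ℕ} {k l : ℕ} (h : k + 2 ≤ l) : Commute (sig (m := m) k) (sig l) := by
  by_cases h1 : 1 ≤ k ∧ k ≤ m
  · by_cases h2 : l ≤ m
    · rw [sig_eq h1.1 h1.2, sig_eq (by omega) h2]
      exact rel_far ⟨k - 1, by omega⟩ ⟨l - 1, by omega⟩ (by simp; omega)
    · rw [sig_out (show ¬(1 ≤ l ∧ l - 1 < m) by omega)]; exact Commute.one_right _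
  · rw [sig_out (by omega)]; exact Commute.one_left _

lemma sig_braid {m : ℕ} {k : ℕ} (h1 : 1 ≤ k) (h2 : k + 1 ≤ m) :
    sig (m := m) k * sig (k + 1) * sig k = sig (k + 1) * sig k * sig (k + 1) := by
  rw [sig_eq h1 (by omega), sig_eq (by omega) h2]
  exact rel_braid ⟨k - 1, by omega⟩ ⟨k + 1 - 1, by omega⟩ (by simp; omega)

lemma rel_one_sig {m : ℕ} (h : 1 ≤ m) :
    sig (m := m) 1 * τ * sig 1 * τ = τ * sig 1 * τ * sig 1 := by
  have h0 := rel_one h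
  rw [sq, sq] at h0
  rw [sig_eq le_rfl h]
  calc σ ⟨0, h⟩ * τ * σ ⟨0, h⟩ * τ = (σ ⟨0, h⟩ * τ) * (σ ⟨0, h⟩ * τ) := by
        simp only [mul_assoc]
    _ = (τ * σ ⟨0, h⟩) * (τ * σ ⟨0, h⟩) := h0
    _ = τ * σ ⟨0, h⟩ * τ * σ ⟨0, h⟩ := by simp only [mul_assoc]

lemma comm_sig_tt {m : ℕ} : ∀ {j k : ℕ}, j + 2 ≤ k → Commute (sig (m := m) k) (tt j)
  | 0, k, h => comm_tau_sig (by omega)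
  | (j + 1), k, h => by
    rw [tt_succ]
    exact ((comm_far (by omega)).symm.mul_right (comm_sig_tt (by omega))).mul_right
      (comm_far (by omega)).symm

lemma key_step {G : Type*} [Group G] (a b x : G)
    (hxb : x * b = b * x) (hbr : a * b * a = b * a * b)
    (hR : a * x * a * x = x * a * x * a) :
    b * (a * x * a) * b * (a * x * a) = a * x * a * b * (a * x * a) * b := by
  have L : b * (a * x * a) * b * (a * x * a)
      = a * b * (x * (a * (x * (a * (b * a))))) := by
    calc b * (a * x * a) * b * (a * x * a)
        = b * a * x * (a * b * a) * (x * a) := by simp only [mul_assoc]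
      _ = b * a * x * (b * a * b) * (x * a) := by rw [hbr]
      _ = b * a * ((x * b) * (a * (b * (x * a)))) := by simp only [mul_assoc]
      _ = b * a * ((b * x) * (a * (b * (x * a)))) := by rw [hxb]
      _ = b * a * b * (x * (a * (b * x))) * a := by simp only [mul_assoc]
      _ = b * a * b * (x * (a * (x * b))) * a := by rw [← hxb]
      _ = (b * a * b) * (x * a * x) * (b * a) := by simp only [mul_assoc]
      _ = (a * b * a) * (x * a * x) * (b * a) := by rw [← hbr]
      _ = a * b * (a * x * a * x) * (b * a) := by simp only [mul_assoc]
      _ = a * b * (x * a * x * a) * (b * a) := by rw [hR]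
      _ = a * b * (x * (a * (x * (a * (b * a))))) := by simp only [mul_assoc]
  have R : a * x * a * b * (a * x * a) * b
      = a * b * (x * (a * (x * (a * (b * a))))) := by
    calc a * x * a * b * (a * x * a) * b
        = a * x * (a * b * a) * (x * (a * b)) := by simp only [mul_assoc]
      _ = a * x * (b * a * b) * (x * (a * b)) := by rw [hbr]
      _ = a * (x * b) * (a * (b * (x * (a * b)))) := by simp only [mul_assoc]
      _ = a * (b * x) * (a * (b * (x * (a * b)))) := by rw [hxb]
      _ = a * b * (x * (a * (b * x))) * (a * b) := by simp only [mul_assoc]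
      _ = a * b * (x * (a * (x * b))) * (a * b) := by rw [← hxb]
      _ = a * b * (x * a * x) * (b * a * b) := by simp only [mul_assoc]
      _ = a * b * (x * a * x) * (a * b * a) := by rw [← hbr]
      _ = a * b * (x * (a * (x * (a * (b * a))))) := by simp only [mul_assoc]
  rw [L, R]

lemma Rlem {m : ℕ} : ∀ i : ℕ, i + 1 ≤ m →
    sig (m := m) (i + 1) * tt i * sig (i + 1) * tt i
      = tt i * sig (i + 1) * tt i * sig (i + 1)
  | 0, h => rel_one_sig h
  | (i + 1), h => by
    rw [tt_succ]
    have hxb : tt (m := m) i * sig (i + 2) = sig (i + 2) * tt i :=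
      (comm_sig_tt (j := i) (k := i + 2) (by omega)).symm.eq
    have hbr := sig_braid (m := m) (k := i + 1) (by omega) (by omega)
    have hR := Rlem (m := m) i (by omega)
    exact key_step (sig (i + 1)) (sig (i + 2)) (tt i) hxb hbr hR

lemma comm_tt {m : ℕ} (i : ℕ) : ∀ j : ℕ, i ≤ j → j ≤ m → Commute (tt (m := m) i) (tt j) := by
  intro j hij
  induction j, hij using Nat.le_induction with
  | base => exact fun _ => Commute.refl _
  | succ j hij ih =>
    intro hj1
    rcases eq_or_lt_of_le hij with rfl | hlt
    · have h4 := Rlem i hj1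
      show tt i * tt (i + 1) = tt (i + 1) * tt i
      rw [tt_succ]
      calc tt (m := m) i * (sig (i + 1) * tt i * sig (i + 1))
          = tt i * sig (i + 1) * tt i * sig (i + 1) := by simp only [mul_assoc]
        _ = sig (i + 1) * tt i * sig (i + 1) * tt i := h4.symm
    · rw [tt_succ]
      have hc : Commute (tt (m := m) i) (sig (j + 1)) :=
        (comm_sig_tt (j := i) (k := j + 1) (by omega)).symm
      exact (hc.mul_right (ih (by omega)).symm.symm).mul_right hc |>.symm.symm

/-- In the mixed braid group `B_{1,n}`, the looping elements
`t_0, t_1, …, t_{n−1}` pairwise commute. -/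
theorem loop_elements_commute (m i j : ℕ) (hi : i ≤ m) (hj : j ≤ m) :
    tt (m := m) i * tt j = tt j * tt i := by
  rcases le_total i j with h | h
  · exact comm_tt i j h hj
  · exact (comm_tt j i h hi).symm.eq

end MB
end

section
/- The Lambropoulou function X is invariant under the algebraic Markov moves for the solid torus: for all n and all α, β ∈ B_{1,n}, X(αβ) = X(βα) (conjugation invariance) and X(t^{±1} α t^{∓1}) = X(α) (loop conjugation invariance); and for the natural inclusion ι : B_{1,n} → B_{1,n+1}, X(ι(α) σ_n^{±1}) = X(α) (stabilization invariance). -/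
set_option synthInstance.maxHeartbeats 1000000
set_option maxHeartbeats 2000000

namespace MB

/-! ## The generalized Iwahori–Hecke algebra of type B, `H_{1,n}(q)` -/

/-- The ground ring `R = ℂ[q^{±1}]` of Laurent polynomials. -/
abbrev R : Type := LaurentPolynomial ℂ

instance : IsDomain R := NoZeroDivisors.to_isDomain _

/-- The variable `q ∈ R`. -/
noncomputable def qq : R := LaurentPolynomial.T 1

/-- The quadratic Hecke relations `σ_i² = (q-1)σ_i + q`. -/
inductive heckeRel (m : ℕ) :
    MonoidAlgebra R (B m) → MonoidAlgebra R (B m) → Prop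
  | quad (i : Fin m) : heckeRel m
      (MonoidAlgebra.of R (B m) (σ i) * MonoidAlgebra.of R (B m) (σ i))
      ((qq - 1) • MonoidAlgebra.of R (B m) (σ i) + qq • (1 : MonoidAlgebra R (B m)))

/-- The generalized Iwahori–Hecke algebra of type B, `H_{1,n}(q)` (`n = m+1`), as the quotient
of the group algebra `R[B_{1,n}]` by the two-sided ideal generated by the quadratic relations. -/
abbrev H (m : ℕ) := RingQuot (heckeRel m)

/-- The canonical multiplicative map `π : B_{1,n} → H_{1,n}(q)`. -/
noncomputable def pih (m : ℕ) : B m →* H m :=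
  (RingQuot.mkRingHom (heckeRel m)).toMonoidHom.comp (MonoidAlgebra.of R (B m))

/-- The subalgebra `H_n(q)` of `H_{1,n}(q)` generated by the images `g_1, …, g_{n-1}`
of `σ_1, …, σ_{n-1}`. -/
noncomputable def HA (m : ℕ) : Subalgebra R (H m) :=
  Algebra.adjoin R (Set.range fun i : Fin m => pih m (σ i))

/-! ## The trace field `F` -/

/-- Polynomials over `R` in the variables `z` (= `X none`) and `s_k`, `k ∈ ℤ` (= `X (some k)`). -/
abbrev P : Type := MvPolynomial (Option ℤ) R

/-- The field of fractions `F` of `P`. -/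
abbrev F : Type := FractionRing P

/-- The variable `z ∈ F`. -/
noncomputable def zF : F := algebraMap P F (MvPolynomial.X none)

/-- The variable `s_k ∈ F`, for `k ∈ ℤ`. -/
noncomputable def sF (k : ℤ) : F := algebraMap P F (MvPolynomial.X (some k))

/-- The image of `q` in `F`. -/
noncomputable def qF : F := algebraMap R F qq

/-! ## The natural inclusions and the Markov trace -/

/-- `ι : B_{1,n} → B_{1,n+1}` is the natural inclusion: it sends `t ↦ t` and `σ_i ↦ σ_i`. -/
def IsGrpIncl {m : ℕ} (ι : B m →* B (m+1)) : Prop :=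
  ι τ = τ ∧ ∀ i : Fin m, ι (σ i) = σ i.castSucc

/-- `f : H_{1,n}(q) → H_{1,n+1}(q)` is the natural inclusion: it is induced by the natural
inclusion `B_{1,n} → B_{1,n+1}`. -/
def IsInclusion {m : ℕ} (f : H m →ₐ[R] H (m+1)) : Prop :=
  ∃ ι : B m →* B (m+1), IsGrpIncl ι ∧ ∀ x : B m, f (pih m x) = pih (m+1) (ι x)

/-- The Markov trace rules for a family of `R`-linear maps `tr : H_{1,n}(q) → F`:
compatibility with the natural inclusions, `tr(ab) = tr(ba)`, `tr(1) = 1`,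
`tr(a g_n) = z·tr(a)` and `tr(a (t′_n)^k) = s_k·tr(a)`. -/
structure IsMarkovTrace (tr : ∀ m, H m →ₗ[R] F) : Prop where
  compat : ∀ (m : ℕ) (f : H m →ₐ[R] H (m+1)), IsInclusion f →
    ∀ a : H m, tr (m+1) (f a) = tr m a
  trace_comm : ∀ (m : ℕ) (a b : H m), tr m (a * b) = tr m (b * a)
  trace_one : ∀ m : ℕ, tr m 1 = 1
  markov : ∀ (m : ℕ) (f : H m →ₐ[R] H (m+1)), IsInclusion f → ∀ a : H m,
    tr (m+1) (f a * pih (m+1) (σ (Fin.last m))) = zF * tr m a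
  loop_rule : ∀ (m : ℕ) (f : H m →ₐ[R] H (m+1)), IsInclusion f → ∀ (a : H m) (k : ℤ),
    tr (m+1) (f a * pih (m+1) (tp (m+1) ^ k)) = sF k * tr m a

/-! ## The Lambropoulou invariant `X` -/

/-- `λ = (z + 1 − q)/(qz) ∈ F`. -/
noncomputable def lamF : F := (zF + 1 - qF) / (qF * zF)

/-- A family of exponent-sum homomorphisms `e : B_{1,n} → ℤ`, sending each `σ_i` to `1`
and `t` to `0` (written multiplicatively). -/
def IsExpSum (e : ∀ m, B m →* Multiplicative ℤ) : Prop :=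
  ∀ m : ℕ, e m τ = 1 ∧ ∀ i : Fin m, e m (σ i) = Multiplicative.ofAdd 1

/-- The Lambropoulou function
`X(α) = ( −(1−λq)/(√λ(1−q)) )^{n−1} · (√λ)^{e(α)} · tr(π(α))`, for `α ∈ B_{1,n}`, `n = m+1`;
here `φ : F → F'` is the inclusion into a field containing a square root `sl` of `λ`. -/
noncomputable def Xinv (tr : ∀ m, H m →ₗ[R] F) {F' : Type} [Field F'] (φ : F →+* F')
    (sl : F') (e : ∀ m, B m →* Multiplicative ℤ) (m : ℕ) (α : B m) : F' :=
  (-(1 - φ lamF * φ qF) / (sl * (1 - φ qF))) ^ m * sl ^ (Multiplicative.toAdd (e m α)) *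
    φ (tr m (pih m α))

/-! Since `1 - λq = (q - 1)/z`, the normalising factor of `X` is `(√λ z)⁻¹`. Conjugation
invariance is the trace property, and conjugation by `t^{±1}` is a special case of it. For
stabilization, the Markov rule gives `tr(ι(α) g_n) = z tr(α)`, and the quadratic relation
`g_n⁻¹ = q⁻¹ g_n - (1 - q⁻¹)` gives `tr(ι(α) g_n⁻¹) = q⁻¹(z + 1 - q) tr(α) = λ z tr(α)`; the
extra factor `(√λ z)⁻¹ (√λ)^{±1}` cancels either one because `λ = (√λ)²`. -/

lemma isUnit_qq : IsUnit qq := LaurentPolynomial.isUnit_T 1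

lemma qq_ne_one : qq ≠ 1 := by
  rw [qq, ← LaurentPolynomial.T_zero, LaurentPolynomial.T, LaurentPolynomial.T,
    Ne, AddMonoidAlgebra.single_left_inj one_ne_zero]
  exact one_ne_zero

lemma qF_eq_algebraMap_C : qF = algebraMap P F (MvPolynomial.C qq) :=
  IsScalarTower.algebraMap_apply R P F qq

lemma zF_ne_zero : zF ≠ 0 :=
  (map_ne_zero_iff _ (IsFractionRing.injective P F)).2 (MvPolynomial.X_ne_zero _)

lemma algebraMap_R_F_injective : Function.Injective (algebraMap R F) := by
  rw [IsScalarTower.algebraMap_eq R P F]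
  exact (IsFractionRing.injective P F).comp (MvPolynomial.C_injective _ _)

lemma qF_ne_zero : qF ≠ 0 :=
  (map_ne_zero_iff _ algebraMap_R_F_injective).2 isUnit_qq.ne_zero

lemma qF_ne_one : qF ≠ 1 := by
  rw [Ne, ← map_one (algebraMap R F), qF, algebraMap_R_F_injective.eq_iff]
  exact qq_ne_one

lemma zF_add_one_sub_qF_ne_zero : zF + 1 - qF ≠ 0 := by
  have hp : (MvPolynomial.X none + 1 - MvPolynomial.C qq : P) ≠ 0 := fun h => by
    have := congrArg (MvPolynomial.eval fun _ => (0 : R)) h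
    simp only [map_sub, map_add, MvPolynomial.eval_X, MvPolynomial.eval_C, map_one,
      map_zero, zero_add, sub_eq_zero] at this
    exact qq_ne_one this.symm
  simpa [zF, qF_eq_algebraMap_C] using (map_ne_zero_iff _ (IsFractionRing.injective P F)).2 hp

lemma lamF_ne_zero : lamF ≠ 0 :=
  div_ne_zero zF_add_one_sub_qF_ne_zero (mul_ne_zero qF_ne_zero zF_ne_zero)

lemma one_sub_lamF_mul_qF : 1 - lamF * qF = -(1 - qF) / zF := by
  rw [lamF]; field_simp [qF_ne_zero, zF_ne_zero]; ring

lemma eq_smul_sub_of_mul_self_eq {S A : Type*} [CommRing S] [Ring A] [Algebra S A] {q : Sˣ}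
    {g h : A} (hg : g * g = ((q : S) - 1) • g + (q : S) • 1) (hh : h * g = 1) :
    h = (↑q⁻¹ : S) • (g - ((q : S) - 1) • 1) := by
  have hinv : g * ((↑q⁻¹ : S) • (g - ((q : S) - 1) • 1)) = 1 := by
    rw [mul_smul_comm, mul_sub, mul_smul_comm, mul_one, hg, add_sub_cancel_left, smul_smul,
      Units.inv_mul, one_smul]
  calc h = h * (g * ((↑q⁻¹ : S) • (g - ((q : S) - 1) • 1))) := by rw [hinv, mul_one]
    _ = _ := by rw [← mul_assoc, hh, one_mul]

lemma pih_eq_mkAlgHom {m : ℕ} (x : B m) :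
    pih m x = RingQuot.mkAlgHom R (heckeRel m) (MonoidAlgebra.of R (B m) x) := by
  rw [← AlgHom.coe_toRingHom, RingQuot.mkAlgHom_coe]; rfl

lemma pih_σ_mul_self {m : ℕ} (i : Fin m) :
    pih m (σ i) * pih m (σ i) = (qq - 1) • pih m (σ i) + qq • 1 := by
  simpa only [map_mul, map_add, map_smul, map_one, ← pih_eq_mkAlgHom]
    using RingQuot.mkAlgHom_rel R (heckeRel.quad i)

lemma pih_σ_inv {m : ℕ} (i : Fin m) :
    pih m (σ i)⁻¹ = isUnit_qq.unit⁻¹.val • (pih m (σ i) - (qq - 1) • 1) := by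
  refine eq_smul_sub_of_mul_self_eq (A := H m) (q := isUnit_qq.unit) (pih_σ_mul_self i) ?_
  rw [← map_mul, inv_mul_cancel, map_one]

noncomputable def inclH {m : ℕ} (ι : B m →* B (m+1)) (hι : IsGrpIncl ι) : H m →ₐ[R] H (m+1) :=
  RingQuot.liftAlgHom R ⟨MonoidAlgebra.lift R (H (m+1)) (B m) ((pih (m+1)).comp ι), by
    rintro _ _ ⟨i⟩
    simp only [map_mul, map_add, map_smul, map_one, MonoidAlgebra.lift_of, MonoidHom.comp_apply,
      hι.2 i]
    exact pih_σ_mul_self i.castSucc⟩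

lemma inclH_pih {m : ℕ} (ι : B m →* B (m+1)) (hι : IsGrpIncl ι) (x : B m) :
    inclH ι hι (pih m x) = pih (m+1) (ι x) := by
  rw [pih_eq_mkAlgHom, inclH, RingQuot.liftAlgHom_mkAlgHom_apply, MonoidAlgebra.lift_of,
    MonoidHom.comp_apply]

lemma isInclusion_inclH {m : ℕ} (ι : B m →* B (m+1)) (hι : IsGrpIncl ι) :
    IsInclusion (inclH ι hι) :=
  ⟨ι, hι, inclH_pih ι hι⟩

namespace IsMarkovTrace

variable {tr : ∀ m, H m →ₗ[R] F} (htr : IsMarkovTrace tr) {m : ℕ} {ι : B m →* B (m+1)}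
  (hι : IsGrpIncl ι) (α : B m)
include htr hι

lemma tr_pih_incl : tr (m+1) (pih (m+1) (ι α)) = tr m (pih m α) := by
  rw [← inclH_pih ι hι, htr.compat m _ (isInclusion_inclH ι hι)]

lemma tr_pih_incl_mul_σ_last :
    tr (m+1) (pih (m+1) (ι α * σ (Fin.last m))) = zF * tr m (pih m α) := by
  rw [map_mul, ← inclH_pih ι hι, htr.markov m _ (isInclusion_inclH ι hι)]

lemma tr_pih_incl_mul_σ_last_inv :
    tr (m+1) (pih (m+1) (ι α * (σ (Fin.last m))⁻¹)) = lamF * zF * tr m (pih m α) := by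
  have hT : algebraMap R F isUnit_qq.unit⁻¹.val = qF⁻¹ := by
    refine eq_inv_of_mul_eq_one_left ?_
    rw [qF, ← map_mul, isUnit_qq.val_inv_mul, map_one]
  calc _ = qF⁻¹ * (zF * tr m (pih m α) - (qF - 1) * tr m (pih m α)) := by
        rw [map_mul, pih_σ_inv, mul_smul_comm, map_smul, mul_sub (pih (m+1) (ι α)),
          mul_smul_comm, mul_one, map_sub, map_smul, ← map_mul, htr.tr_pih_incl_mul_σ_last hι,
          htr.tr_pih_incl hι, Algebra.smul_def, Algebra.smul_def, hT, map_sub, map_one, ← qF]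
    _ = _ := by
        rw [lamF]
        field_simp [qF_ne_zero, zF_ne_zero]
        ring

end IsMarkovTrace

lemma IsExpSum.map_incl {e : ∀ m, B m →* Multiplicative ℤ} (he : IsExpSum e) {m : ℕ}
    {ι : B m →* B (m+1)} (hι : IsGrpIncl ι) (α : B m) : e (m+1) (ι α) = e m α := by
  suffices (e (m+1)).comp ι = e m from DFunLike.congr_fun this α
  refine PresentedGroup.ext fun x => ?_
  cases x with
  | none =>
    show e (m+1) (ι τ) = e m τ
    rw [hι.1, (he (m+1)).1, (he m).1]
  | some i =>
    show e (m+1) (ι (σ i)) = e m (σ i)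
    rw [hι.2 i, (he (m+1)).2, (he m).2]

section Xinv

variable {tr : ∀ m, H m →ₗ[R] F} {F' : Type} [Field F'] (φ : F →+* F') (sl : F')
  {e : ∀ m, B m →* Multiplicative ℤ}

lemma Xinv_eq (m : ℕ) (α : B m) :
    Xinv tr φ sl e m α = (sl * φ zF)⁻¹ ^ m * sl ^ (e m α).toAdd * φ (tr m (pih m α)) := by
  have hq : φ (1 - qF) ≠ 0 := (map_ne_zero φ).2 (sub_ne_zero.2 qF_ne_one.symm)
  have hprefactor : -(1 - φ lamF * φ qF) / (sl * (1 - φ qF)) = (sl * φ zF)⁻¹ := by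
    rw [← map_mul, ← map_one φ, ← map_sub, ← map_sub, one_sub_lamF_mul_qF, map_div₀, map_neg]
    field_simp
  rw [Xinv, hprefactor]

variable {φ sl}

lemma Xinv_mul_comm (htr : IsMarkovTrace tr) {m : ℕ} (α β : B m) :
    Xinv tr φ sl e m (α * β) = Xinv tr φ sl e m (β * α) := by
  simp only [Xinv, map_mul, htr.trace_comm m (pih m α), mul_comm (e m α)]

lemma Xinv_conj (htr : IsMarkovTrace tr) {m : ℕ} (γ α : B m) :
    Xinv tr φ sl e m (γ * α * γ⁻¹) = Xinv tr φ sl e m α := by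
  rw [Xinv_mul_comm htr, inv_mul_cancel_left]

lemma Xinv_succ_eq (hsl : sl ≠ 0) {m : ℕ} {α : B m} {β : B (m+1)} {k : ℤ}
    (he : (e (m+1) β).toAdd = (e m α).toAdd + k)
    (htr : φ (tr (m+1) (pih (m+1) β)) = sl ^ (-k) * (sl * φ zF) * φ (tr m (pih m α))) :
    Xinv tr φ sl e (m+1) β = Xinv tr φ sl e m α := by
  have hz : φ zF ≠ 0 := (map_ne_zero φ).2 zF_ne_zero
  rw [Xinv_eq, Xinv_eq, he, htr, zpow_add₀ hsl, zpow_neg, pow_succ]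
  field_simp

end Xinv

/-- The Lambropoulou function `X` is invariant under the algebraic Markov
moves for the solid torus: conjugation, loop conjugation and stabilization. -/
theorem X_markov_invariance (tr : ∀ m, H m →ₗ[R] F) (htr : IsMarkovTrace tr)
    (e : ∀ m, B m →* Multiplicative ℤ) (he : IsExpSum e)
    (F' : Type) [Field F'] (φ : F →+* F') (sl : F') (hsl : sl ^ 2 = φ lamF) :
    (∀ (m : ℕ) (α β : B m),
        Xinv tr φ sl e m (α * β) = Xinv tr φ sl e m (β * α)) ∧
    (∀ (m : ℕ) (α : B m),
        Xinv tr φ sl e m (τ * α * τ⁻¹) = Xinv tr φ sl e m α ∧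
        Xinv tr φ sl e m (τ⁻¹ * α * τ) = Xinv tr φ sl e m α) ∧
    ∀ (m : ℕ) (ι : B m →* B (m+1)), IsGrpIncl ι → ∀ α : B m,
        Xinv tr φ sl e (m+1) (ι α * σ (Fin.last m)) = Xinv tr φ sl e m α ∧
        Xinv tr φ sl e (m+1) (ι α * (σ (Fin.last m))⁻¹) = Xinv tr φ sl e m α := by
  have hsl0 : sl ≠ 0 := by
    rintro rfl
    exact (map_ne_zero φ).2 lamF_ne_zero (by rw [← hsl, zero_pow two_ne_zero])
  refine ⟨fun m => Xinv_mul_comm htr, fun m α => ⟨Xinv_conj htr τ α, ?_⟩,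
    fun m ι hι α => ⟨?_, ?_⟩⟩
  · simpa only [inv_inv] using Xinv_conj htr τ⁻¹ α
  · refine Xinv_succ_eq hsl0 (k := 1) ?_ ?_
    · rw [map_mul, he.map_incl hι, (he (m+1)).2, toAdd_mul, toAdd_ofAdd]
    · rw [htr.tr_pih_incl_mul_σ_last hι, zpow_neg_one, map_mul]
      field_simp
  · refine Xinv_succ_eq hsl0 (k := -1) ?_ ?_
    · rw [map_mul, map_inv, he.map_incl hι, (he (m+1)).2, toAdd_mul, toAdd_inv, toAdd_ofAdd]
    · rw [htr.tr_pih_incl_mul_σ_last_inv hι, neg_neg, zpow_one, map_mul, map_mul, ← hsl]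
      ring

end MB
end

section
/- The Lambropoulou function X satisfies the HOMFLYPT skein relation: if F″ is a field extension of F′ containing also an element √q with (√q)^2 = q, then for all n, all 1 ≤ i ≤ n−1, and all α, β ∈ B_{1,n}, (1/(√q √λ)) · X(α σ_i β) − (√q √λ) · X(α σ_i^{−1} β) = (√q − 1/√q) · X(α β). -/
set_option synthInstance.maxHeartbeats 1000000
set_option maxHeartbeats 2000000

namespace MB

/-
The quadratic relation makes `g_i = π(σ_i)` invertible with `g_i⁻¹ = q⁻¹ g_i + (q⁻¹ - 1)`, so by
linearity `tr(π(ασ_i⁻¹β)) = q⁻¹ tr(π(ασ_iβ)) + (q⁻¹ - 1) tr(π(αβ))`. The exponent sums of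
`ασ_i^{±1}β` are `e(αβ) ± 1`, and with `q = (√q)²` the skein relation becomes an identity of
rational functions in `√q` and `√λ`.
-/

noncomputable def qqInv : R := LaurentPolynomial.T (-1)

lemma qq_mul_qqInv : qq * qqInv = 1 := by
  rw [qq, qqInv, ← LaurentPolynomial.T_add, add_neg_cancel, LaurentPolynomial.T_zero]

lemma mul_hecke_inverse_eq_one {S A : Type*} [CommRing S] [Ring A] [Algebra S A] {q q' : S}
    (hq : q * q' = 1) {g : A} (hg : g * g = (q - 1) • g + q • 1) :
    g * (q' • g + (q' - 1) • 1) = 1 := by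
  have h₁ : q' * (q - 1) + (q' - 1) = 0 := by linear_combination hq
  have h₂ : q' * q = 1 := by rw [mul_comm, hq]
  rw [mul_add, mul_smul_comm, mul_smul_comm, hg, mul_one, smul_add, smul_smul, smul_smul, h₂,
    one_smul, add_right_comm, ← add_smul, h₁, zero_smul, zero_add]

section Hecke

variable {m : ℕ}

lemma pih_sigma_mul_self (i : Fin m) :
    pih m (σ i) * pih m (σ i) = (qq - 1) • pih m (σ i) + qq • 1 := by
  have h := RingQuot.mkRingHom_rel (heckeRel.quad (m := m) i)
  rw [← RingQuot.mkAlgHom_coe R, AlgHom.coe_toRingHom, map_add, map_smul, map_smul, map_mul,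
    map_one] at h
  simpa only [pih, MonoidHom.coe_comp, Function.comp_apply, RingHom.toMonoidHom_eq_coe,
    MonoidHom.coe_coe, ← RingQuot.mkAlgHom_coe R, AlgHom.coe_toRingHom] using h

lemma pih_sigma_inv (i : Fin m) :
    pih m (σ i)⁻¹ = qqInv • pih m (σ i) + (qqInv - 1) • 1 :=
  left_inv_eq_right_inv (by rw [← map_mul, inv_mul_cancel, map_one])
    (mul_hecke_inverse_eq_one (g := pih m (σ i)) qq_mul_qqInv (pih_sigma_mul_self i))

lemma pih_mul_sigma_inv_mul (i : Fin m) (α β : B m) :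
    pih m (α * (σ i)⁻¹ * β) =
      qqInv • pih m (α * σ i * β) + (qqInv - 1) • pih m (α * β) := by
  simp only [map_mul, pih_sigma_inv, mul_add, add_mul, mul_smul_comm, smul_mul_assoc, mul_one]

end Hecke

lemma qF_mul_algebraMap_qqInv : qF * algebraMap R F qqInv = 1 := by
  rw [qF, ← map_mul, qq_mul_qqInv, map_one]

lemma algebraMap_qqInv : algebraMap R F qqInv = qF⁻¹ :=
  eq_inv_of_mul_eq_one_right qF_mul_algebraMap_qqInv

lemma trace_pih_mul_sigma_inv_mul (tr : ∀ m, H m →ₗ[R] F) {m : ℕ} (i : Fin m) (α β : B m) :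
    tr m (pih m (α * (σ i)⁻¹ * β)) =
      qF⁻¹ * tr m (pih m (α * σ i * β)) + (qF⁻¹ - 1) * tr m (pih m (α * β)) := by
  rw [pih_mul_sigma_inv_mul, map_add, map_smul, map_smul, Algebra.smul_def, Algebra.smul_def,
    map_sub, map_one, algebraMap_qqInv]

lemma toAdd_mul_sigma_mul {e : ∀ m, B m →* Multiplicative ℤ} (he : IsExpSum e) {m : ℕ}
    (i : Fin m) (α β : B m) :
    (e m (α * σ i * β)).toAdd = (e m (α * β)).toAdd + 1 := by
  simp only [map_mul, (he m).2 i, toAdd_mul, toAdd_ofAdd]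
  ring

lemma toAdd_mul_sigma_inv_mul {e : ∀ m, B m →* Multiplicative ℤ} (he : IsExpSum e) {m : ℕ}
    (i : Fin m) (α β : B m) :
    (e m (α * (σ i)⁻¹ * β)).toAdd = (e m (α * β)).toAdd - 1 := by
  simp only [map_mul, map_inv, (he m).2 i, toAdd_mul, toAdd_inv, toAdd_ofAdd]
  ring

theorem X_skein_relation_general (tr : ∀ m, H m →ₗ[R] F)
    (e : ∀ m, B m →* Multiplicative ℤ) (he : IsExpSum e)
    (F' : Type) [Field F'] (φ : F →+* F') (sl : F') (hsl : sl ^ 2 = φ lamF)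
    (sq : F') (hsq : sq ^ 2 = φ qF) :
    ∀ (m : ℕ) (i : Fin m) (α β : B m),
      (1 / (sq * sl)) * Xinv tr φ sl e m (α * σ i * β) -
        (sq * sl) * Xinv tr φ sl e m (α * (σ i)⁻¹ * β) =
      (sq - 1 / sq) * Xinv tr φ sl e m (α * β) := by
  intro m i α β
  have hsl0 : sl ≠ 0 := ne_zero_pow two_ne_zero (hsl ▸ (map_ne_zero φ).2 lamF_ne_zero)
  have hsq0 : sq ≠ 0 := ne_zero_pow two_ne_zero (hsq ▸ (map_ne_zero φ).2 qF_ne_zero)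
  rw [Xinv, Xinv, Xinv, toAdd_mul_sigma_mul he, toAdd_mul_sigma_inv_mul he,
    trace_pih_mul_sigma_inv_mul, zpow_add₀ hsl0, zpow_sub₀ hsl0, zpow_one]
  simp only [map_add, map_mul, map_sub, map_inv₀, map_one, ← hsq]
  field_simp
  ring

/-- The Lambropoulou function `X` satisfies the HOMFLYPT skein relation
`(1/(√q√λ))·X(ασ_iβ) − (√q√λ)·X(ασ_i⁻¹β) = (√q − 1/√q)·X(αβ)`. -/
theorem X_skein_relation (tr : ∀ m, H m →ₗ[R] F) (htr : IsMarkovTrace tr)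
    (e : ∀ m, B m →* Multiplicative ℤ) (he : IsExpSum e)
    (F' : Type) [Field F'] (φ : F →+* F') (sl : F') (hsl : sl ^ 2 = φ lamF)
    (sq : F') (hsq : sq ^ 2 = φ qF) :
    ∀ (m : ℕ) (i : Fin m) (α β : B m),
      (1 / (sq * sl)) * Xinv tr φ sl e m (α * σ i * β) -
        (sq * sl) * Xinv tr φ sl e m (α * (σ i)⁻¹ * β) =
      (sq - 1 / sq) * Xinv tr φ sl e m (α * β) :=
  X_skein_relation_general tr e he F' φ sl hsl sq hsq

end MB
end

section
/- The ordering of monomials is a strict total order on Λ, and for every k ∈ ℤ the level set Λ_{(k)} is well-ordered: every nonempty subset of Λ_{(k)} has a least element. -/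
set_option synthInstance.maxHeartbeats 1000000
set_option maxHeartbeats 2000000

namespace MB

/-! Elements of `Λ` are identified with their exponent sequences: finite non-increasing
lists of nonzero integers. -/

/-- The ordering on exponent sequences: compare exponent sums, then lengths (indices),
then, at the last differing position, absolute values and signs of the exponents. -/
def lamLT (x y : List ℤ) : Prop :=
  x.sum < y.sum ∨
  (x.sum = y.sum ∧
    (x.length < y.length ∨
      (x.length = y.length ∧ ∃ (a : ℕ) (ha : a < x.length) (hb : a < y.length),
        x.get ⟨a, ha⟩ ≠ y.get ⟨a, hb⟩ ∧
        (∀ (b : ℕ) (h1 : b < x.length) (h2 : b < y.length), a < b →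
          x.get ⟨b, h1⟩ = y.get ⟨b, h2⟩) ∧
        (|x.get ⟨a, ha⟩| < |y.get ⟨a, hb⟩| ∨
          (|x.get ⟨a, ha⟩| = |y.get ⟨a, hb⟩| ∧ y.get ⟨a, hb⟩ < x.get ⟨a, ha⟩)))))

/-- The set `Λ`, identified with the set of finite non-increasing sequences of nonzero
integers. -/
def Lam : Type := {l : List ℤ // l.Chain' (· ≥ ·) ∧ ∀ x ∈ l, x ≠ 0}

/-- The ordering on `Λ`. -/
def LamLT (x y : Lam) : Prop := lamLT x.val y.val

/-! Rank the exponents `0, 1, -1, 2, -2, …` in the order of condition (c). Then `τ < u` is the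
lexicographic comparison of the keys (exponent sum, length, ranks read colexicographically), and
this key is injective, so the order is a strict total order. On a level set only
(length, colex ranks) varies, and it lives in `ℕ ×ₗ Colex (ℕ →₀ ℕ)`, which is well-ordered. -/

def expRank (m : ℤ) : ℕ := if 0 < m then 2 * m.natAbs - 1 else 2 * m.natAbs

theorem expRank_lt_expRank_iff {m n : ℤ} :
    expRank m < expRank n ↔ |m| < |n| ∨ (|m| = |n| ∧ n < m) := by
  simp only [expRank, Int.abs_eq_natAbs]
  split_ifs <;> omega

theorem expRank_injective : Function.Injective expRank := by
  intro m n h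
  simp only [expRank] at h
  split_ifs at h <;> omega

def colexRank (x : List ℤ) : Colex (ℕ →₀ ℕ) := toColex (x.map expRank).toFinsupp

theorem colexRank_apply_of_lt {x : List ℤ} {i : ℕ} (hi : i < x.length) :
    ofColex (colexRank x) i = expRank x[i] := by
  simp [colexRank, hi]

theorem colexRank_apply_of_le {x : List ℤ} {i : ℕ} (hi : x.length ≤ i) :
    ofColex (colexRank x) i = 0 := by
  simp [colexRank, hi]

theorem colexRank_lt_colexRank_iff {x y : List ℤ} (h : x.length = y.length) :
    colexRank x < colexRank y ↔ ∃ (a : ℕ) (ha : a < x.length) (hb : a < y.length),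
        x.get ⟨a, ha⟩ ≠ y.get ⟨a, hb⟩ ∧
        (∀ (b : ℕ) (h1 : b < x.length) (h2 : b < y.length), a < b →
          x.get ⟨b, h1⟩ = y.get ⟨b, h2⟩) ∧
        (|x.get ⟨a, ha⟩| < |y.get ⟨a, hb⟩| ∨
          (|x.get ⟨a, ha⟩| = |y.get ⟨a, hb⟩| ∧ y.get ⟨a, hb⟩ < x.get ⟨a, ha⟩)) := by
  simp only [Finsupp.Colex.lt_iff, List.get_eq_getElem, ← expRank_lt_expRank_iff]
  constructor
  · rintro ⟨a, hafter, hlt⟩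
    have ha : a < x.length := by
      by_contra hle
      rw [colexRank_apply_of_le (by omega), colexRank_apply_of_le (by omega)] at hlt
      exact lt_irrefl 0 hlt
    have hb : a < y.length := h ▸ ha
    rw [colexRank_apply_of_lt ha, colexRank_apply_of_lt hb] at hlt
    refine ⟨a, ha, hb, fun he => hlt.ne (congrArg expRank he), fun b h1 h2 hab => ?_, hlt⟩
    apply expRank_injective
    rw [← colexRank_apply_of_lt h1, ← colexRank_apply_of_lt h2]
    exact hafter b hab
  · rintro ⟨a, ha, hb, -, hafter, hlt⟩
    refine ⟨a, fun b hab => ?_, by rwa [colexRank_apply_of_lt ha, colexRank_apply_of_lt hb]⟩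
    by_cases hbx : b < x.length
    · rw [colexRank_apply_of_lt hbx, colexRank_apply_of_lt (h ▸ hbx), hafter b hbx (h ▸ hbx) hab]
    · rw [colexRank_apply_of_le (by omega), colexRank_apply_of_le (by omega)]

def shapeKey (x : List ℤ) : ℕ ×ₗ Colex (ℕ →₀ ℕ) := toLex (x.length, colexRank x)

theorem shapeKey_injective : Function.Injective shapeKey := by
  intro x y h
  obtain ⟨hlen, hrank⟩ := Prod.ext_iff.mp (congrArg ofLex h)
  refine List.ext_getElem hlen fun i hx hy => expRank_injective ?_
  rw [← colexRank_apply_of_lt hx, ← colexRank_apply_of_lt hy]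
  exact congrArg (fun r : Colex (ℕ →₀ ℕ) => ofColex r i) hrank

def lamKey (x : List ℤ) : ℤ ×ₗ (ℕ ×ₗ Colex (ℕ →₀ ℕ)) := toLex (x.sum, shapeKey x)

theorem lamKey_injective : Function.Injective lamKey :=
  fun _ _ h => shapeKey_injective (Prod.ext_iff.mp (congrArg ofLex h)).2

theorem lamLT_iff_lamKey_lt {x y : List ℤ} : lamLT x y ↔ lamKey x < lamKey y := by
  simp only [lamKey, shapeKey, Prod.Lex.toLex_lt_toLex]
  exact or_congr_right <| and_congr_right fun _ => or_congr_right <|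
    and_congr_right fun hlen => (colexRank_lt_colexRank_iff hlen).symm

theorem exists_forall_eq_or_lt_of_injective {α β : Type*} [LinearOrder β] [WellFoundedLT β]
    {f : α → β} (hf : Function.Injective f) {S : Set α} (hS : S.Nonempty) :
    ∃ a ∈ S, ∀ b ∈ S, a = b ∨ f a < f b := by
  refine ⟨Function.argminOn f S hS, Function.argminOn_mem f S hS, fun b hb => ?_⟩
  rcases (not_lt.mp (Function.not_lt_argminOn f S hb)).lt_or_eq with hlt | heq
  · exact Or.inr hlt
  · exact Or.inl (hf heq)

/-- The ordering of monomials is a strict total order on `Λ`, and every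
level set `Λ_{(k)}` is well-ordered: every nonempty subset has a least element. -/
theorem lam_strict_total_order_and_well_ordered :
    IsStrictTotalOrder Lam LamLT ∧
    ∀ (k : ℤ) (S : Set Lam), S.Nonempty → (∀ l ∈ S, l.val.sum = k) →
      ∃ a ∈ S, ∀ b ∈ S, a = b ∨ LamLT a b := by
  refine ⟨?_, fun k S hS hsum => ?_⟩
  · have hLT : LamLT = Function.onFun (· < ·) fun l : Lam => lamKey l.val := by
      ext x y
      exact lamLT_iff_lamKey_lt
    rw [hLT]
    exact (lamKey_injective.comp Subtype.val_injective).isStrictTotalOrder_onFun (r := (· < ·))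
  · obtain ⟨a, ha, hmin⟩ :=
      exists_forall_eq_or_lt_of_injective (shapeKey_injective.comp Subtype.val_injective) hS
    refine ⟨a, ha, fun b hb => (hmin b hb).imp_right fun hlt => ?_⟩
    exact lamLT_iff_lamKey_lt.mpr <|
      Prod.Lex.toLex_lt_toLex.mpr (Or.inr ⟨(hsum a ha).trans (hsum b hb).symm, hlt⟩)

end MB
end

section
/- In H_{1,n}(q) (n ≥ 1), the powers {t^k : k ∈ ℤ} of the looping generator t are linearly independent over R; in particular t satisfies no polynomial relation and H_{1,n}(q) is an infinite-dimensional R-module. -/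
set_option synthInstance.maxHeartbeats 1000000
set_option maxHeartbeats 2000000

namespace LaurentPolynomial

variable {S : Type*} [Semiring S]

theorem val_unitOfInvertible_T_one_zpow (k : ℤ) :
    ((unitOfInvertible (T 1 : S[T;T⁻¹]) ^ k : S[T;T⁻¹]ˣ) : S[T;T⁻¹]) = T k := by
  induction k using Int.induction_on with
  | zero => simp
  | succ n ih => rw [zpow_add_one, Units.val_mul, ih, val_unitOfInvertible, ← T_add]
  | pred n ih =>
    rw [zpow_sub_one, Units.val_mul, ih, val_inv_unitOfInvertible, invOf_T, ← T_sub]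

theorem linearIndependent_T : LinearIndependent S (fun k : ℤ => (T k : S[T;T⁻¹])) :=
  (AddMonoidAlgebra.basis ℤ S).linearIndependent

end LaurentPolynomial

namespace MB

section AbelianCharacter

variable {m : ℕ} {A : Type*} [CommGroup A]

theorem lift_eq_one_of_mem_rels (a s : A) :
    ∀ r ∈ rels m, FreeGroup.lift (fun x : MBGen m => x.elim a fun _ => s) r = 1 := by
  rintro r (⟨_, rfl⟩ | ⟨_, _, rfl⟩ | ⟨_, _, _, rfl⟩ | ⟨_, _, _, rfl⟩) <;>
    simp only [map_mul, map_pow, map_inv, FreeGroup.lift_apply_of, Option.elim, mul_inv_eq_one,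
      mul_comm s a]

def abelianChar (a s : A) : B m →* A := PresentedGroup.toGroup (lift_eq_one_of_mem_rels a s)

@[simp]
theorem abelianChar_τ (a s : A) : abelianChar a s (τ : B m) = a :=
  PresentedGroup.toGroup.of (lift_eq_one_of_mem_rels a s)

@[simp]
theorem abelianChar_σ (a s : A) (i : Fin m) : abelianChar a s (σ i) = s :=
  PresentedGroup.toGroup.of (lift_eq_one_of_mem_rels a s)

end AbelianCharacter

def SatisfiesHeckeRelation {A : Type*} [Semiring A] [Algebra R A] (s : A) : Prop :=
  s * s = (qq - 1) • s + qq • 1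

theorem satisfiesHeckeRelation_neg_one {A : Type*} [Ring A] [Algebra R A] :
    SatisfiesHeckeRelation (-1 : A) := by
  rw [SatisfiesHeckeRelation, neg_mul_neg, one_mul]
  module

section HeckeCharacter

variable (m : ℕ) {A : Type*} [CommSemiring A] [Algebra R A]

noncomputable def heckeLift (a s : Aˣ) (hs : SatisfiesHeckeRelation (s : A)) : H m →ₐ[R] A :=
  RingQuot.liftAlgHom R ⟨MonoidAlgebra.lift R A (B m) ((Units.coeHom A).comp (abelianChar a s)),
    by
      rintro _ _ ⟨i⟩
      simp only [map_mul, map_add, map_smul, map_one, MonoidAlgebra.lift_of,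
        MonoidHom.comp_apply, Units.coeHom_apply, abelianChar_σ]
      exact hs⟩

variable {m}

theorem heckeLift_pih (a s : Aˣ) (hs : SatisfiesHeckeRelation (s : A)) (g : B m) :
    heckeLift m a s hs (pih m g) = abelianChar a s g := by
  rw [pih, MonoidHom.comp_apply, RingHom.toMonoidHom_eq_coe, MonoidHom.coe_coe,
    ← RingQuot.mkAlgHom_coe R, AlgHom.coe_toRingHom, heckeLift, RingQuot.liftAlgHom_mkAlgHom_apply]
  exact MonoidAlgebra.lift_of _ g

end HeckeCharacter

open LaurentPolynomial in
/-- In `H_{1,n}(q)` the powers `t^k`, `k ∈ ℤ`, are linearly independent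
over `R`; in particular `t` satisfies no polynomial relation and `H_{1,n}(q)` is an
infinite-dimensional `R`-module. -/
theorem t_powers_linearIndependent (m : ℕ) :
    LinearIndependent R (fun k : ℤ => pih m (τ ^ k)) ∧ ¬ Module.Finite R (H m) := by
  set φ := heckeLift m (unitOfInvertible (T 1 : R[T;T⁻¹])) (-1)
    (by simpa using satisfiesHeckeRelation_neg_one)
  have hφ : φ.toLinearMap ∘ (fun k : ℤ => pih m (τ ^ k)) = fun k => T k := by
    funext k
    simp [φ, heckeLift_pih, val_unitOfInvertible_T_one_zpow]
  have hli : LinearIndependent R (fun k : ℤ => pih m (τ ^ k)) :=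
    .of_comp φ.toLinearMap (hφ ▸ linearIndependent_T)
  exact ⟨hli, fun _ => Module.Finite.not_linearIndependent_of_infinite _ hli⟩

end MB
end
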